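/- For every ω ∈ ℝ with |ω| ≥ 1, the sum over j ≥ -1 of b(2^{-j}ω)² equals 1, where for each ω only finitely many terms are nonzero. -/

import Mathlib

/-!
If `2 ^ k ≤ |ω| < 2 ^ (k + 1)`, the dilate `2 ^ (1 - n) * ω` has modulus in `[1, 4)`, the only
region where `b` can be nonzero, just for `n = k` and `n = k + 1`. With `y = 2 ^ (-k) * ω` these two
terms are `b (2 * y)` and `b y`, where `1 ≤ |y| < 2`, and there `b y` and `b (2 * y)` are the sine
and cosine of the same angle `π / 2 * v (|y| - 1)`.
-/

noncomputable def v (x : ℝ) : ℝ :=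
  if x < 0 then 0
  else if x ≤ 1 then 35*x^4 - 84*x^5 + 70*x^6 - 20*x^7
  else 1

noncomputable def b (ω : ℝ) : ℝ :=
  if 1 ≤ |ω| ∧ |ω| ≤ 2 then Real.sin (Real.pi/2 * v (|ω| - 1))
  else if 2 < |ω| ∧ |ω| ≤ 4 then Real.cos (Real.pi/2 * v (|ω|/2 - 1))
  else 0

lemma v_zero : v 0 = 0 := by norm_num [v]

lemma v_one : v 1 = 1 := by norm_num [v]

lemma b_eq_zero_of_abs_lt_one {t : ℝ} (ht : |t| < 1) : b t = 0 := by
  rw [b, if_neg (by linarith [·.1]), if_neg (by linarith [·.1])]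

lemma b_eq_zero_of_four_le_abs {t : ℝ} (ht : 4 ≤ |t|) : b t = 0 := by
  rw [b, if_neg (by linarith [·.2])]
  split_ifs with h
  · norm_num [le_antisymm h.2 ht, v_one]
  · rfl

lemma abs_mem_Ico_of_b_ne_zero {t : ℝ} (ht : b t ≠ 0) : 1 ≤ |t| ∧ |t| < 4 := by
  by_contra! h
  by_cases h1 : 1 ≤ |t|
  · exact ht (b_eq_zero_of_four_le_abs (h h1))
  · exact ht (b_eq_zero_of_abs_lt_one (not_le.mp h1))

lemma b_sq_add_b_two_mul_sq {y : ℝ} (hy₁ : 1 ≤ |y|) (hy₂ : |y| ≤ 2) :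
    b y ^ 2 + b (2 * y) ^ 2 = 1 := by
  have h2y : |2 * y| = 2 * |y| := by rw [abs_mul, abs_two]
  rcases hy₁.eq_or_lt with hy | hy
  · rw [b, b, h2y, ← hy, if_pos (by norm_num), if_pos (by norm_num)]
    norm_num [v_zero, v_one]
  · rw [b, b, h2y, if_pos ⟨hy₁, hy₂⟩, if_neg (by linarith [·.1]), if_pos ⟨by linarith, by linarith⟩,
      mul_div_cancel_left₀ _ two_ne_zero]
    exact Real.sin_sq_add_cos_sq _

lemma add_eq_zero_or_eq_one_of_dyadic {x : ℝ} {k m : ℤ} (hk : 2 ^ k ≤ x ∧ x < 2 ^ (k + 1))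
    (hm : 1 ≤ 2 ^ m * x ∧ 2 ^ m * x < 4) : m + k = 0 ∨ m + k = 1 := by
  have hlo : (2 : ℝ) ^ (0 : ℤ) < 2 ^ (m + (k + 1)) := calc
    (2 : ℝ) ^ (0 : ℤ) ≤ 2 ^ m * x := by simpa using hm.1
    _ < 2 ^ m * 2 ^ (k + 1) := by gcongr; exact hk.2
    _ = 2 ^ (m + (k + 1)) := (zpow_add₀ two_ne_zero _ _).symm
  have hhi : (2 : ℝ) ^ (m + k) < 2 ^ (2 : ℤ) := calc
    (2 : ℝ) ^ (m + k) = 2 ^ m * 2 ^ k := zpow_add₀ two_ne_zero _ _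
    _ ≤ 2 ^ m * x := by gcongr; exact hk.1
    _ < 2 ^ (2 : ℤ) := by norm_num [hm.2]
  rw [zpow_lt_zpow_iff_right₀ one_lt_two] at hlo hhi
  omega

theorem b_partition_of_unity :
    ∀ ω : ℝ, 1 ≤ |ω| →
      (Function.support (fun n : ℕ => b ((2:ℝ) ^ ((1:ℤ) - n) * ω) ^ 2)).Finite ∧
      ∑' n : ℕ, b ((2:ℝ) ^ ((1:ℤ) - n) * ω) ^ 2 = 1 := by
  intro ω hω
  obtain ⟨k, hk⟩ : ∃ k : ℕ, (2 : ℝ) ^ (k : ℤ) ≤ |ω| ∧ |ω| < 2 ^ ((k : ℤ) + 1) := by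
    obtain ⟨k, hk⟩ := exists_nat_pow_near hω one_lt_two
    exact ⟨k, by exact_mod_cast hk⟩
  have hsupp : Function.support (fun n : ℕ => b ((2:ℝ) ^ ((1:ℤ) - n) * ω) ^ 2) ⊆
      ({k, k + 1} : Finset ℕ) := by
    intro n hn
    have hb := abs_mem_Ico_of_b_ne_zero (pow_ne_zero_iff two_ne_zero |>.mp hn)
    rw [abs_mul, abs_of_pos (by positivity)] at hb
    have hwindow := add_eq_zero_or_eq_one_of_dyadic hk hb
    simp only [Finset.coe_insert, Finset.coe_singleton, Set.mem_insert_iff, Set.mem_singleton_iff]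
    omega
  refine ⟨(Finset.finite_toSet _).subset hsupp, ?_⟩
  set y := (2 : ℝ) ^ (-(k : ℤ)) * ω with hy_def
  have hy : 1 ≤ |y| ∧ |y| < 2 := by
    rw [abs_mul, abs_of_pos (by positivity), zpow_neg, le_inv_mul_iff₀ (by positivity),
      inv_mul_lt_iff₀ (by positivity), mul_one, ← zpow_add_one₀ two_ne_zero]
    exact hk
  have hterm_succ : (2 : ℝ) ^ ((1 : ℤ) - (k + 1 : ℕ)) * ω = y := by
    rw [hy_def]
    congr 2
    push_cast
    ring
  have hterm : (2 : ℝ) ^ ((1 : ℤ) - k) * ω = 2 * y := by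
    rw [← mul_assoc, ← zpow_one_add₀ two_ne_zero]
    ring_nf
  rw [tsum_eq_sum' hsupp, Finset.sum_pair (by omega), hterm, hterm_succ, add_comm]
  exact b_sq_add_b_two_mul_sq hy.1 hy.2.le
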